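/- Let j0 ∈ ℤ and let (a_j)_{j ≥ j0} be a solution on [0, ∞) of the Friedlander–Pavlovic model 2 da_j/dt = 2^{5j/2} a_{j-1}² − 2^{5(j+1)/2} a_j a_{j+1} for j > j0, with 2 da_{j0}/dt = −2^{5(j0+1)/2} a_{j0} a_{j0+1}, such that a_j(t) ≥ 0 for all j and t ≥ 0, and assume that for every j > j0 the tail energy E_{B(j)}(t) = Σ_{l ≥ j} a_l(t)² is finite for every t ≥ 0 and differentiable in t with d/dt E_{B(j)}(t) = 2^{5j/2} a_{j-1}(t)² a_j(t). Then for every α > 0 and every q with max(2^{-5}, 2^{-2α}) < q < 1, there exists an integer J0 such that: if E_{B(J)}(0) ≥ q^J for some integer J ≥ J0, then there exists a finite time T such that sup_{t ∈ [0, T]} Σ_{j ≥ j0} (1 + 2^{2αj}) a_j(t)² = +∞. In other words, the Friedlander–Pavlovic model exhibits finite-time blow-up of the H^α norm for every α > 0, not just for α > 3/2. -/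

import Mathlib

/-!
With `κ = 2^{5/2}` the model is the chain model `2 a_j' = κ^j a_{j-1}² - κ^{j+1} a_j a_{j+1}`.
Suppose `E j s ≥ q^j` but `E (j+1) < q^{j+1}` throughout `[s, s + Δ]`. As `E j` is nondecreasing,
there `a_j² = E j - E (j+1) ≥ (1 - q) q^j` and `a_{j+2}² ≤ E (j+1) < q^{j+1}`, so `a_{j+1}` is
forced upward at a rate bounded below and damped at a bounded rate. By Grönwall it soon exceeds half
its equilibrium level, after which the flux `κ^{j+1} a_j² a_{j+1}` into `E (j+1)` lifts `E (j+1)`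
to `q^{j+1}` before `s + Δ` when `Δ = stepTime κ q j`: a contradiction. So the threshold
`E j ≥ q^j` climbs from mode `j` to mode `j + 1` within `stepTime κ q j`, and these times shrink
geometrically by the factor `(κ √q)⁻¹ < 1`, since `q > 2^{-5} = κ^{-2}`. Hence at a finite time `T`
all `E j T ≥ q^j` for `j ≥ J`, and the `H^α` norm at `T` is at least
`2^{2αj} E j T ≥ (2^{2α} q)^j → ∞`, since `q > 2^{-2α}`.
-/

open scoped ENNReal
open Real Set Filter Topology

section Calculus

variable {f f' : ℝ → ℝ} {s : Set ℝ} {x y : ℝ}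

theorem monotoneOn_Icc_of_hasDerivWithinAt_nonneg (hsub : Icc x y ⊆ s)
    (hf : ∀ t ∈ Icc x y, HasDerivWithinAt f (f' t) s t) (hf' : ∀ t ∈ Icc x y, 0 ≤ f' t) :
    MonotoneOn f (Icc x y) :=
  monotoneOn_of_hasDerivWithinAt_nonneg (convex_Icc x y)
    (fun t ht => ((hf t ht).mono hsub).continuousWithinAt)
    (fun t ht => (hf t (interior_subset ht)).mono (interior_subset.trans hsub))
    (fun t ht => hf' t (interior_subset ht))

theorem add_mul_sub_le_of_le_hasDerivWithinAt {c : ℝ} (hxy : x ≤ y) (hsub : Icc x y ⊆ s)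
    (hf : ∀ t ∈ Icc x y, HasDerivWithinAt f (f' t) s t) (hf' : ∀ t ∈ Icc x y, c ≤ f' t) :
    f x + c * (y - x) ≤ f y := by
  have hmono := monotoneOn_Icc_of_hasDerivWithinAt_nonneg (f := fun t => f t - c * t)
    (f' := fun t => f' t - c) hsub
    (fun t ht => (hf t ht).sub (by simpa using (hasDerivWithinAt_id t s).const_mul c))
    (fun t ht => sub_nonneg.2 (hf' t ht))
  have := hmono (left_mem_Icc.2 hxy) (right_mem_Icc.2 hxy) hxy
  simp only at this
  linarith

theorem sub_mul_exp_le_of_le_hasDerivWithinAt {b K : ℝ} (hxy : x ≤ y) (hsub : Icc x y ⊆ s)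
    (hf : ∀ t ∈ Icc x y, HasDerivWithinAt f (f' t) s t)
    (hf' : ∀ t ∈ Icc x y, b * (K - f t) ≤ f' t) :
    K - (K - f x) * exp (-(b * (y - x))) ≤ f y := by
  have hmono := monotoneOn_Icc_of_hasDerivWithinAt_nonneg
    (f := fun t => (f t - K) * exp (b * t))
    (f' := fun t => f' t * exp (b * t) + (f t - K) * (exp (b * t) * b)) hsub
    (fun t ht => ((hf t ht).sub_const K).mul
      (by simpa using ((hasDerivWithinAt_id t s).const_mul b).exp))
    (fun t ht => by nlinarith [hf' t ht, exp_pos (b * t)])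
  have hxy' := hmono (left_mem_Icc.2 hxy) (right_mem_Icc.2 hxy) hxy
  simp only at hxy'
  have hsplit : exp (b * x) = exp (b * y) * exp (-(b * (y - x))) := by
    rw [← exp_add]; ring_nf
  rw [hsplit] at hxy'
  nlinarith [exp_pos (b * y)]

end Calculus

theorem exists_mem_Icc_sum_range_of_step {P : ℤ → ℝ → Prop} {d : ℤ → ℝ} {J : ℤ}
    (h0 : P J 0)
    (hstep : ∀ j, J ≤ j → ∀ s, 0 ≤ s → P j s → ∃ s' ∈ Icc s (s + d j), P (j + 1) s') (k : ℕ) :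
    ∃ s ∈ Icc 0 (∑ i ∈ Finset.range k, d (J + i)), P (J + k) s := by
  induction k with
  | zero => exact ⟨0, by simp, by simpa using h0⟩
  | succ k ih =>
    obtain ⟨s, hs, hP⟩ := ih
    obtain ⟨s', hs', hP'⟩ := hstep (J + k) (by omega) s hs.1 hP
    refine ⟨s', ⟨hs.1.trans hs'.1, ?_⟩, by simpa [add_assoc] using hP'⟩
    rw [Finset.sum_range_succ]
    linarith [hs.2, hs'.2]

theorem sum_range_le_div_one_sub_of_succ_eq_mul {d : ℤ → ℝ} {ρ : ℝ} {J : ℤ} (hρ0 : 0 ≤ ρ)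
    (hρ1 : ρ < 1) (hd : 0 ≤ d J) (hsucc : ∀ j, d (j + 1) = ρ * d j) (k : ℕ) :
    ∑ i ∈ Finset.range k, d (J + i) ≤ d J / (1 - ρ) := by
  have hgeom : ∀ i : ℕ, d (J + i) = d J * ρ ^ i := by
    intro i
    induction i with
    | zero => simp
    | succ i ih => rw [Nat.cast_succ, ← add_assoc, hsucc, ih, pow_succ]; ring
  rw [Finset.sum_congr rfl fun i _ => hgeom i, ← Finset.mul_sum, Finset.range_eq_Ico]
  calc d J * ∑ i ∈ Finset.Ico 0 k, ρ ^ i ≤ d J * (ρ ^ 0 / (1 - ρ)) :=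
        mul_le_mul_of_nonneg_left (geom_sum_Ico_le_of_lt_one hρ0 hρ1) hd
    _ = d J / (1 - ρ) := by ring

theorem ofReal_mul_tsum_ofReal_le_tsum_ofReal_mul {w b : ℕ → ℝ} (hw : Monotone w) {n : ℕ}
    (hwn : 0 ≤ w n) (hb : ∀ l, 0 ≤ b l) :
    ENNReal.ofReal (w n) * ∑' l, ENNReal.ofReal (b (n + l)) ≤
      ∑' l, ENNReal.ofReal (w l * b l) := by
  rw [← ENNReal.tsum_mul_left]
  calc ∑' l, ENNReal.ofReal (w n) * ENNReal.ofReal (b (n + l))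
      ≤ ∑' l, ENNReal.ofReal (w (n + l) * b (n + l)) := ENNReal.tsum_le_tsum fun l => by
        rw [← ENNReal.ofReal_mul hwn]
        exact ENNReal.ofReal_le_ofReal
          (mul_le_mul_of_nonneg_right (hw (Nat.le_add_right n l)) (hb _))
    _ ≤ ∑' l, ENNReal.ofReal (w l * b l) :=
        ENNReal.tsum_comp_le_tsum_of_injective (add_right_injective n) _

theorem tsum_ofReal_one_add_two_rpow_mul_sq_eq_top {b : ℤ → ℝ} {j0 : ℤ} {α q : ℝ}
    (hα : 0 ≤ α) (hq : 0 ≤ q) (hαq : 1 < 2 ^ (2 * α) * q)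
    (hsum : ∀ᶠ n : ℕ in atTop, Summable fun l : ℕ => b (j0 + n + l) ^ 2)
    (hb : ∀ᶠ n : ℕ in atTop, q ^ (j0 + n) ≤ ∑' l : ℕ, b (j0 + n + l) ^ 2) :
    ∑' l : ℕ, ENNReal.ofReal ((1 + (2 : ℝ) ^ (2 * α * ((j0 : ℝ) + (l : ℝ)))) * b (j0 + l) ^ 2)
      = ⊤ := by
  set c := (2 : ℝ) ^ (2 * α) * q
  have hc0 : 0 < c := one_pos.trans hαq
  set w : ℕ → ℝ := fun l => 1 + (2 : ℝ) ^ (2 * α * ((j0 : ℝ) + (l : ℝ)))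
  have hw_mono : Monotone w := fun l l' hl => by
    have : (l : ℝ) ≤ l' := Nat.cast_le.2 hl
    exact (add_le_add_iff_left 1).2 (rpow_le_rpow_of_exponent_le one_le_two (by nlinarith))
  have hcw : ∀ n : ℕ, c ^ (j0 + n) ≤ w n * q ^ (j0 + n) := fun n => by
    have hcast : ((j0 + n : ℤ) : ℝ) = (j0 : ℝ) + n := by push_cast; ring
    rw [mul_zpow, ← rpow_intCast ((2 : ℝ) ^ (2 * α)), ← rpow_mul zero_le_two, hcast]
    exact mul_le_mul_of_nonneg_right (le_add_of_nonneg_left zero_le_one) (zpow_nonneg hq _)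
  have hlim : Tendsto (fun n : ℕ => ENNReal.ofReal (c ^ (j0 + n))) atTop (𝓝 ⊤) := by
    refine ENNReal.tendsto_ofReal_atTop.comp ?_
    simp_rw [zpow_add₀ hc0.ne', zpow_natCast]
    exact (tendsto_pow_atTop_atTop_of_one_lt hαq).const_mul_atTop (zpow_pos hc0 _)
  refine top_unique (le_of_tendsto hlim ((hsum.and hb).mono fun n ⟨hsn, hbn⟩ => ?_))
  have hwn : 0 ≤ w n := by positivity
  calc ENNReal.ofReal (c ^ (j0 + n))
      ≤ ENNReal.ofReal (w n * ∑' l : ℕ, b (j0 + n + l) ^ 2) :=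
        ENNReal.ofReal_le_ofReal ((hcw n).trans (mul_le_mul_of_nonneg_left hbn hwn))
    _ = ENNReal.ofReal (w n) * ∑' l : ℕ, ENNReal.ofReal (b (j0 + ↑(n + l)) ^ 2) := by
        rw [ENNReal.ofReal_mul hwn,
          ENNReal.ofReal_tsum_of_nonneg (fun _ => sq_nonneg _) hsn]
        push_cast
        simp only [add_assoc]
    _ ≤ _ := ofReal_mul_tsum_ofReal_le_tsum_ofReal_mul (b := fun l => b (j0 + l) ^ 2) hw_mono
          hwn (fun _ => sq_nonneg _)

namespace ChainModel

variable {κ q : ℝ} {j : ℤ}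

/-- Lower bound for the forcing `κ^{j+1} a_j²` of mode `j + 1` while
`E j ≥ q^j` and `E (j+1) < q^{j+1}`. -/
noncomputable def forcing (κ q : ℝ) (j : ℤ) : ℝ := κ ^ (j + 1) * ((1 - q) * q ^ j)

/-- Upper bound for the damping rate `κ^{j+2} a_{j+2}` of mode `j + 1` while
`E (j+1) < q^{j+1}`. -/
noncomputable def damping (κ q : ℝ) (j : ℤ) : ℝ := κ ^ (j + 2) * √q ^ (j + 1)

/-- The time for mode `j + 1` to reach half its equilibrium value `forcing / damping`, plus the
time the energy flux then needs to raise `E (j + 1)` to `q^{j+1}`. -/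
noncomputable def stepTime (κ q : ℝ) (j : ℤ) : ℝ :=
  2 * log 2 / damping κ q j + 2 * damping κ q j * q ^ (j + 1) / forcing κ q j ^ 2

theorem forcing_pos (hκ : 0 < κ) (hq : 0 < q) (hq1 : q < 1) : 0 < forcing κ q j := by
  unfold forcing
  have := sub_pos.2 hq1
  positivity

theorem damping_pos (hκ : 0 < κ) (hq : 0 < q) : 0 < damping κ q j := by
  unfold damping
  have := sqrt_pos.2 hq
  positivity

theorem stepTime_pos (hκ : 0 < κ) (hq : 0 < q) (hq1 : q < 1) : 0 < stepTime κ q j := by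
  have := damping_pos (j := j) hκ hq
  have := forcing_pos (j := j) hκ hq hq1
  unfold stepTime
  positivity

theorem forcing_succ (hκ : 0 < κ) (hq : 0 < q) :
    forcing κ q (j + 1) = κ * q * forcing κ q j := by
  simp only [forcing, zpow_add_one₀ hκ.ne', zpow_add_one₀ hq.ne']
  ring

theorem damping_succ (hκ : 0 < κ) (hq : 0 < q) :
    damping κ q (j + 1) = κ * √q * damping κ q j := by
  simp only [damping, show j + 1 + 2 = j + 2 + 1 by ring, zpow_add_one₀ hκ.ne',
    zpow_add_one₀ (sqrt_pos.2 hq).ne']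
  ring

theorem stepTime_succ (hκ : 0 < κ) (hq : 0 < q) (hq1 : q < 1) :
    stepTime κ q (j + 1) = (κ * √q)⁻¹ * stepTime κ q j := by
  have hB := (damping_pos (j := j) hκ hq).ne'
  have hA := (forcing_pos (j := j) hκ hq hq1).ne'
  simp only [stepTime, forcing_succ hκ hq, damping_succ hκ hq, zpow_add_one₀ hq.ne']
  obtain ⟨r, hr, rfl⟩ : ∃ r, 0 < r ∧ r ^ 2 = q := ⟨√q, sqrt_pos.2 hq, sq_sqrt hq.le⟩
  rw [sqrt_sq hr.le]
  field_simp

end ChainModel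

structure IsChainModelSolution (κ : ℝ) (j0 : ℤ) (a E : ℤ → ℝ → ℝ) : Prop where
  hasDerivWithinAt : ∀ j : ℤ, j0 < j → ∀ t : ℝ, 0 ≤ t →
    HasDerivWithinAt (a j) ((κ ^ j * a (j - 1) t ^ 2 - κ ^ (j + 1) * a j t * a (j + 1) t) / 2)
      (Ici 0) t
  nonneg : ∀ j : ℤ, j0 < j → ∀ t : ℝ, 0 ≤ t → 0 ≤ a j t
  tail_eq : ∀ j : ℤ, ∀ t : ℝ, E j t = ∑' l : ℕ, a (j + l) t ^ 2
  summable : ∀ j : ℤ, j0 < j → ∀ t : ℝ, 0 ≤ t → Summable fun l : ℕ => a (j + l) t ^ 2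
  hasDerivWithinAt_tail : ∀ j : ℤ, j0 < j → ∀ t : ℝ, 0 ≤ t →
    HasDerivWithinAt (E j) (κ ^ j * a (j - 1) t ^ 2 * a j t) (Ici 0) t

namespace IsChainModelSolution

open ChainModel

variable {κ q : ℝ} {j0 j : ℤ} {a E : ℤ → ℝ → ℝ} {s s₁ t : ℝ}

theorem tail_nonneg (h : IsChainModelSolution κ j0 a E) (j : ℤ) (t : ℝ) : 0 ≤ E j t := by
  rw [h.tail_eq]
  exact tsum_nonneg fun _ => sq_nonneg _

theorem tail_eq_sq_add_tail_succ (h : IsChainModelSolution κ j0 a E) (hj : j0 < j)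
    (ht : 0 ≤ t) : E j t = a j t ^ 2 + E (j + 1) t := by
  rw [h.tail_eq, h.tail_eq, (h.summable j hj t ht).tsum_eq_zero_add]
  congr 1
  · simp
  · refine tsum_congr fun l => ?_
    congr 2
    push_cast
    ring

theorem tail_succ_le (h : IsChainModelSolution κ j0 a E) (hj : j0 < j) (ht : 0 ≤ t) :
    E (j + 1) t ≤ E j t := by
  rw [h.tail_eq_sq_add_tail_succ hj ht]
  linarith [sq_nonneg (a j t)]

theorem sq_le_tail (h : IsChainModelSolution κ j0 a E) (hj : j0 < j) (ht : 0 ≤ t) :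
    a j t ^ 2 ≤ E j t := by
  rw [h.tail_eq_sq_add_tail_succ hj ht]
  linarith [h.tail_nonneg (j + 1) t]

theorem tail_monotoneOn (h : IsChainModelSolution κ j0 a E) (hκ : 0 ≤ κ) (hj : j0 < j) :
    MonotoneOn (E j) (Ici 0) :=
  monotoneOn_of_hasDerivWithinAt_nonneg (convex_Ici 0)
    (fun t ht => (h.hasDerivWithinAt_tail j hj t ht).continuousWithinAt)
    (fun t ht => (h.hasDerivWithinAt_tail j hj t (interior_subset ht)).mono interior_subset)
    (fun t ht => mul_nonneg (mul_nonneg (zpow_nonneg hκ j) (sq_nonneg _))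
      (h.nonneg j hj t (interior_subset ht)))

theorem hasDerivWithinAt_succ (h : IsChainModelSolution κ j0 a E) (hj : j0 < j) (ht : 0 ≤ t) :
    HasDerivWithinAt (a (j + 1))
      ((κ ^ (j + 1) * a j t ^ 2 - κ ^ (j + 2) * a (j + 1) t * a (j + 2) t) / 2) (Ici 0) t := by
  have hd := h.hasDerivWithinAt (j + 1) (by omega) t ht
  rwa [add_sub_cancel_right, add_assoc j 1 1, one_add_one_eq_two] at hd

theorem hasDerivWithinAt_tail_succ (h : IsChainModelSolution κ j0 a E) (hj : j0 < j)
    (ht : 0 ≤ t) :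
    HasDerivWithinAt (E (j + 1)) (κ ^ (j + 1) * a j t ^ 2 * a (j + 1) t) (Ici 0) t := by
  have hd := h.hasDerivWithinAt_tail (j + 1) (by omega) t ht
  rwa [add_sub_cancel_right] at hd

theorem forcing_le_of_tail_succ_lt (h : IsChainModelSolution κ j0 a E) (hκ : 0 < κ)
    (hq : 0 < q) (hj : j0 < j) (hs : 0 ≤ s) (hE : q ^ j ≤ E j s)
    (hlow : ∀ t ∈ Icc s s₁, E (j + 1) t < q ^ (j + 1)) :
    ∀ t ∈ Icc s s₁, forcing κ q j ≤ κ ^ (j + 1) * a j t ^ 2 := by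
  intro t ht
  have ht0 : 0 ≤ t := hs.trans ht.1
  have hEt : q ^ j ≤ E j t := hE.trans (h.tail_monotoneOn hκ.le hj hs ht0 ht.1)
  have hsplit := h.tail_eq_sq_add_tail_succ hj ht0
  have hlt := hlow t ht
  rw [zpow_add_one₀ hq.ne'] at hlt
  exact mul_le_mul_of_nonneg_left (by linarith) (zpow_nonneg hκ.le _)

theorem mul_le_damping_of_tail_succ_lt (h : IsChainModelSolution κ j0 a E) (hκ : 0 < κ)
    (hq : 0 < q) (hj : j0 < j) (hs : 0 ≤ s)
    (hlow : ∀ t ∈ Icc s s₁, E (j + 1) t < q ^ (j + 1)) :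
    ∀ t ∈ Icc s s₁, κ ^ (j + 2) * a (j + 2) t ≤ damping κ q j := by
  intro t ht
  have ht0 : 0 ≤ t := hs.trans ht.1
  have hsq : a (j + 2) t ^ 2 ≤ (√q ^ (j + 1)) ^ 2 := by
    have hroot : (√q ^ (j + 1)) ^ 2 = q ^ (j + 1) := by
      rw [← zpow_natCast, ← zpow_mul, mul_comm, zpow_mul, zpow_natCast, sq_sqrt hq.le]
    rw [hroot]
    have h2 := h.sq_le_tail (j := j + 2) (by omega) ht0
    have h1 := h.tail_succ_le (j := j + 1) (by omega) ht0
    rw [add_assoc, one_add_one_eq_two] at h1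
    linarith [hlow t ht]
  have hle := (pow_le_pow_iff_left₀ (h.nonneg _ (by omega) t ht0)
    (zpow_nonneg (sqrt_nonneg q) _) two_ne_zero).1 hsq
  exact mul_le_mul_of_nonneg_left hle (zpow_nonneg hκ.le _)

theorem half_div_le_of_tail_succ_lt (h : IsChainModelSolution κ j0 a E) (hκ : 0 < κ)
    (hq : 0 < q) (hq1 : q < 1) (hj : j0 < j) (hs : 0 ≤ s) (hE : q ^ j ≤ E j s)
    (hlow : ∀ t ∈ Icc s s₁, E (j + 1) t < q ^ (j + 1)) :
    ∀ t ∈ Icc (s + 2 * log 2 / damping κ q j) s₁,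
      forcing κ q j / (2 * damping κ q j) ≤ a (j + 1) t := by
  intro t ht
  set A := forcing κ q j
  set B := damping κ q j
  have hA : 0 < A := forcing_pos hκ hq hq1
  have hB : 0 < B := damping_pos hκ hq
  have hτ : 0 ≤ 2 * log 2 / B := by positivity
  have hst : s ≤ t := by linarith [ht.1]
  have hsub : Icc s t ⊆ Icc s s₁ := Icc_subset_Icc_right ht.2
  have hgron := sub_mul_exp_le_of_le_hasDerivWithinAt (b := B / 2) (K := A / B) hst
    (fun u hu => hs.trans hu.1)
    (f' := fun u => (κ ^ (j + 1) * a j u ^ 2 - κ ^ (j + 2) * a (j + 1) u * a (j + 2) u) / 2)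
    (fun u hu => h.hasDerivWithinAt_succ hj (hs.trans hu.1))
    (fun u hu => by
      have hforce := h.forcing_le_of_tail_succ_lt hκ hq hj hs hE hlow u (hsub hu)
      have hdamp := h.mul_le_damping_of_tail_succ_lt hκ hq hj hs hlow u (hsub hu)
      have hnn := h.nonneg (j + 1) (by omega) u (hs.trans hu.1)
      have : B / 2 * (A / B - a (j + 1) u) = (A - B * a (j + 1) u) / 2 := by
        field_simp
      rw [this]
      nlinarith)
  have hexp : exp (-(B / 2 * (t - s))) ≤ 1 / 2 := by
    rw [← exp_log (by norm_num : (0 : ℝ) < 1 / 2), exp_le_exp, one_div, log_inv]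
    have : 2 * log 2 ≤ B * (t - s) := by
      rw [← div_le_iff₀' hB]
      linarith [ht.1]
    linarith
  have hnn := h.nonneg (j + 1) (by omega) s hs
  have hK : 0 ≤ A / B := by positivity
  have : A / (2 * B) = A / B - A / B * (1 / 2) := by field_simp; ring
  rw [this]
  nlinarith [exp_pos (-(B / 2 * (t - s)))]

theorem exists_tail_succ_ge (h : IsChainModelSolution κ j0 a E) (hκ : 0 < κ) (hq : 0 < q)
    (hq1 : q < 1) (hj : j0 < j) (hs : 0 ≤ s) (hE : q ^ j ≤ E j s) :
    ∃ s' ∈ Icc s (s + stepTime κ q j), q ^ (j + 1) ≤ E (j + 1) s' := by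
  by_contra! hlow
  set A := forcing κ q j
  set B := damping κ q j
  set τ := 2 * log 2 / B
  have hA : 0 < A := forcing_pos hκ hq hq1
  have hB : 0 < B := damping_pos hκ hq
  have hτ : 0 ≤ τ := by positivity
  have hΔ : stepTime κ q j = τ + 2 * B * q ^ (j + 1) / A ^ 2 := rfl
  have hΔτ : τ ≤ stepTime κ q j := by
    have := zpow_pos hq (j + 1)
    have : 0 ≤ 2 * B * q ^ (j + 1) / A ^ 2 := by positivity
    linarith
  have hgrowth := add_mul_sub_le_of_le_hasDerivWithinAt (f := E (j + 1)) (s := Ici 0)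
    (c := A * (A / (2 * B))) (x := s + τ) (y := s + stepTime κ q j) (by linarith)
    (fun u hu => (add_nonneg hs hτ).trans hu.1)
    (f' := fun u => κ ^ (j + 1) * a j u ^ 2 * a (j + 1) u)
    (fun u hu => h.hasDerivWithinAt_tail_succ hj ((add_nonneg hs hτ).trans hu.1))
    (fun u hu => by
      have huI : u ∈ Icc s (s + stepTime κ q j) := ⟨by linarith [hu.1], hu.2⟩
      exact mul_le_mul (h.forcing_le_of_tail_succ_lt hκ hq hj hs hE hlow u huI)
        (h.half_div_le_of_tail_succ_lt hκ hq hq1 hj hs hE hlow u hu) (by positivity)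
        (by positivity))
  have hgain : A * (A / (2 * B)) * (s + stepTime κ q j - (s + τ)) = q ^ (j + 1) := by
    rw [hΔ]
    field_simp
    ring
  linarith [h.tail_nonneg (j + 1) (s + τ), hlow (s + stepTime κ q j) ⟨by linarith, le_rfl⟩]

theorem exists_forall_zpow_le_tail (h : IsChainModelSolution κ j0 a E) (hκ : 0 < κ)
    (hq : 0 < q) (hq1 : q < 1) (hκq : 1 < κ ^ 2 * q) {J : ℤ} (hJ : j0 < J) (hEJ : q ^ J ≤ E J 0) :
    ∃ T > 0, ∀ j, J ≤ j → q ^ j ≤ E j T := by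
  have hκq' : 1 < κ * √q :=
    lt_of_pow_lt_pow_left₀ 2 (by positivity) (by rw [mul_pow, sq_sqrt hq.le]; simpa using hκq)
  have hρ1 : (κ * √q)⁻¹ < 1 := inv_lt_one_of_one_lt₀ hκq'
  have hsum_le := sum_range_le_div_one_sub_of_succ_eq_mul (by positivity) hρ1
    (stepTime_pos (j := J) hκ hq hq1).le (fun j => stepTime_succ hκ hq hq1)
  refine ⟨stepTime κ q J / (1 - (κ * √q)⁻¹),
    div_pos (stepTime_pos hκ hq hq1) (sub_pos.2 hρ1), fun j hj => ?_⟩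
  obtain ⟨k, rfl⟩ : ∃ k : ℕ, j = J + k := ⟨(j - J).toNat, by omega⟩
  obtain ⟨s, hs, hqs⟩ := exists_mem_Icc_sum_range_of_step (P := fun j s => q ^ j ≤ E j s) hEJ
    (fun j hj s hs hqs => h.exists_tail_succ_ge hκ hq hq1 (by omega) hs hqs) k
  have hsT := hs.2.trans (hsum_le k)
  exact hqs.trans (h.tail_monotoneOn hκ.le (by omega) hs.1 (hs.1.trans hsT) hsT)

end IsChainModelSolution

theorem friedlanderPavlovic_finite_time_blowup_general
    (j0 : ℤ) (a : ℤ → ℝ → ℝ)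
    (hchain : ∀ j : ℤ, j0 < j → ∀ t : ℝ, 0 ≤ t →
      HasDerivWithinAt (a j)
        (((2 : ℝ) ^ (5 * (j : ℝ) / 2) * (a (j - 1) t) ^ 2
          - (2 : ℝ) ^ (5 * ((j : ℝ) + 1) / 2) * a j t * a (j + 1) t) / 2)
        (Set.Ici 0) t)
    (hnonneg : ∀ j : ℤ, j0 ≤ j → ∀ t : ℝ, 0 ≤ t → 0 ≤ a j t)
    (E : ℤ → ℝ → ℝ)
    (hE : ∀ j : ℤ, ∀ t : ℝ, E j t = ∑' l : ℕ, (a (j + l) t) ^ 2)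
    (hsum : ∀ j : ℤ, j0 < j → ∀ t : ℝ, 0 ≤ t →
      Summable (fun l : ℕ => (a (j + l) t) ^ 2))
    (hEderiv : ∀ j : ℤ, j0 < j → ∀ t : ℝ, 0 ≤ t →
      HasDerivWithinAt (E j) ((2 : ℝ) ^ (5 * (j : ℝ) / 2) * (a (j - 1) t) ^ 2 * a j t)
        (Set.Ici 0) t)
    (α : ℝ) (hα : 0 < α)
    (q : ℝ) (hq1 : max ((2 : ℝ) ^ (-5 : ℤ)) ((2 : ℝ) ^ (-(2 * α))) < q)
    (hq2 : q < 1) :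
    ∃ J0 : ℤ, j0 ≤ J0 ∧ ∀ J : ℤ, J0 ≤ J → q ^ J ≤ E J 0 →
      ∃ T : ℝ, 0 < T ∧
        (⨆ t ∈ Set.Icc (0 : ℝ) T,
          ∑' l : ℕ, ENNReal.ofReal
            ((1 + (2 : ℝ) ^ (2 * α * ((j0 : ℝ) + (l : ℝ)))) * (a (j0 + l) t) ^ 2))
          = (⊤ : ℝ≥0∞) := by
  obtain ⟨hq5, hqα⟩ := max_lt_iff.1 hq1
  have hq : 0 < q := (zpow_pos two_pos _).trans hq5
  set κ : ℝ := 2 ^ ((5 : ℝ) / 2)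
  have hκ_pow : ∀ x : ℝ, (2 : ℝ) ^ (5 * x / 2) = κ ^ x := fun x => by
    rw [← rpow_mul zero_le_two]; ring_nf
  have hsol : IsChainModelSolution κ j0 a E :=
    { hasDerivWithinAt := fun j hj t ht => by
        simpa only [hκ_pow, ← rpow_intCast, Int.cast_add, Int.cast_one] using hchain j hj t ht
      nonneg := fun j hj => hnonneg j hj.le
      tail_eq := hE
      summable := hsum
      hasDerivWithinAt_tail := fun j hj t ht => by
        simpa only [hκ_pow, ← rpow_intCast] using hEderiv j hj t ht }
  have hκq : 1 < κ ^ 2 * q := by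
    rw [← rpow_natCast, ← rpow_mul zero_le_two]
    norm_num at hq5 ⊢
    linarith
  have hαq : 1 < 2 ^ (2 * α) * q := by
    have := mul_lt_mul_of_pos_left hqα (rpow_pos_of_pos two_pos (2 * α))
    rwa [← rpow_add two_pos, add_neg_cancel, rpow_zero] at this
  refine ⟨j0 + 1, by omega, fun J hJ hEJ => ?_⟩
  obtain ⟨T, hT, hET⟩ :=
    hsol.exists_forall_zpow_le_tail (by positivity) hq hq2 hκq (by omega) hEJ
  have hblowup := tsum_ofReal_one_add_two_rpow_mul_sq_eq_top (b := fun j => a j T)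
    hα.le hq.le hαq
    (eventually_atTop.2 ⟨(J - j0).toNat, fun n hn => hsum (j0 + n) (by omega) T hT.le⟩)
    (eventually_atTop.2 ⟨(J - j0).toNat, fun n hn => hE (j0 + n) T ▸ hET (j0 + n) (by omega)⟩)
  exact ⟨T, hT, top_unique (le_iSup₂_of_le T ⟨hT.le, le_rfl⟩ hblowup.ge)⟩

/-- The Friedlander–Pavlovic model
`2 da_j/dt = 2^{5j/2} a_{j-1}² − 2^{5(j+1)/2} a_j a_{j+1}` (`j > j0`),
`2 da_{j0}/dt = −2^{5(j0+1)/2} a_{j0} a_{j0+1}`, with nonnegative solution and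
tail energies `E_{B(j)}` finite and satisfying
`d/dt E_{B(j)} = 2^{5j/2} a_{j-1}² a_j`, exhibits finite-time blow-up of the
`H^α` norm for every `α > 0` (not just `α > 3/2`): for every `q` with
`max(2^{-5}, 2^{-2α}) < q < 1` there is `J0` such that if `E_{B(J)}(0) ≥ q^J`
for some `J ≥ J0`, then `sup_{t ∈ [0,T]} Σ_{j ≥ j0} (1 + 2^{2αj}) a_j(t)² = ∞`
for some finite time `T`. -/
theorem friedlanderPavlovic_finite_time_blowup
    (j0 : ℤ) (a : ℤ → ℝ → ℝ)
    (hchain : ∀ j : ℤ, j0 < j → ∀ t : ℝ, 0 ≤ t →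
      HasDerivWithinAt (a j)
        (((2 : ℝ) ^ (5 * (j : ℝ) / 2) * (a (j - 1) t) ^ 2
          - (2 : ℝ) ^ (5 * ((j : ℝ) + 1) / 2) * a j t * a (j + 1) t) / 2)
        (Set.Ici 0) t)
    (hchain0 : ∀ t : ℝ, 0 ≤ t →
      HasDerivWithinAt (a j0)
        (-((2 : ℝ) ^ (5 * ((j0 : ℝ) + 1) / 2) * a j0 t * a (j0 + 1) t) / 2)
        (Set.Ici 0) t)
    (hnonneg : ∀ j : ℤ, j0 ≤ j → ∀ t : ℝ, 0 ≤ t → 0 ≤ a j t)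
    (E : ℤ → ℝ → ℝ)
    (hE : ∀ j : ℤ, ∀ t : ℝ, E j t = ∑' l : ℕ, (a (j + l) t) ^ 2)
    (hsum : ∀ j : ℤ, j0 < j → ∀ t : ℝ, 0 ≤ t →
      Summable (fun l : ℕ => (a (j + l) t) ^ 2))
    (hEderiv : ∀ j : ℤ, j0 < j → ∀ t : ℝ, 0 ≤ t →
      HasDerivWithinAt (E j) ((2 : ℝ) ^ (5 * (j : ℝ) / 2) * (a (j - 1) t) ^ 2 * a j t)
        (Set.Ici 0) t)
    (α : ℝ) (hα : 0 < α)
    (q : ℝ) (hq1 : max ((2 : ℝ) ^ (-5 : ℤ)) ((2 : ℝ) ^ (-(2 * α))) < q)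
    (hq2 : q < 1) :
    ∃ J0 : ℤ, j0 ≤ J0 ∧ ∀ J : ℤ, J0 ≤ J → q ^ J ≤ E J 0 →
      ∃ T : ℝ, 0 < T ∧
        (⨆ t ∈ Set.Icc (0 : ℝ) T,
          ∑' l : ℕ, ENNReal.ofReal
            ((1 + (2 : ℝ) ^ (2 * α * ((j0 : ℝ) + (l : ℝ)))) * (a (j0 + l) t) ^ 2))
          = (⊤ : ℝ≥0∞) :=
  friedlanderPavlovic_finite_time_blowup_general j0 a hchain hnonneg E hE hsum hEderiv α hα q hq1
    hq2
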